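/- arXiv:1410.7066 — 2 statements merged into one kernel-verified Lean document; each statement's English description precedes it below -/
import Mathlib

section
/- Let T : H → H be a bounded operator on a Hilbert space, u ∈ range(T), and f† the minimal-norm solution of Tf = u. Then the Tikhonov solutions f_α = (T*T + αI)⁻¹T*u converge to f† in norm as α → 0⁺. -/
/-!
A minimal-norm solution `f†` is orthogonal to `ker T`, hence lies in
`(ker T)ᗮ = closure (range T*)`. The error `e = f† - f_α` solves `T*T e + α e = α f†`; pairing
with `e` gives `‖T e‖² + α ‖e‖² = α ⟪f†, e⟫`. Writing `f† = T* w + r` with `‖r‖` small and using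
`⟪T* w, e⟫ = ⟪w, T e⟫`, this yields `‖e‖² ≤ α ‖w‖² / 2 + ‖r‖²`, which is small for small `α`.
-/

open ContinuousLinearMap Filter Topology
open scoped InnerProductSpace

theorem Submodule.mem_orthogonal_of_forall_norm_le_norm_sub {𝕜 F : Type*} [RCLike 𝕜]
    [NormedAddCommGroup F] [InnerProductSpace 𝕜 F] {K : Submodule 𝕜 F} {x : F}
    (h : ∀ k ∈ K, ‖x‖ ≤ ‖x - k‖) : x ∈ Kᗮ := by
  have hbdd : BddBelow (Set.range fun w : K => ‖x - w‖) :=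
    ⟨0, Set.forall_mem_range.2 fun w => norm_nonneg _⟩
  have hmin : ‖x - 0‖ = ⨅ w : K, ‖x - w‖ :=
    le_antisymm (le_ciInf fun w => by simpa using h w w.2) (by simpa using ciInf_le hbdd 0)
  simpa [Submodule.mem_orthogonal'] using (K.norm_eq_iInf_iff_inner_eq_zero K.zero_mem).1 hmin

section Tikhonov

variable {E F : Type*} [NormedAddCommGroup E] [InnerProductSpace ℝ E] [CompleteSpace E]
  [NormedAddCommGroup F] [InnerProductSpace ℝ F] [CompleteSpace F] (T : E →L[ℝ] F)

theorem ContinuousLinearMap.norm_sq_le_of_tikhonov_eq {α : ℝ} (hα : 0 < α) {x r : E} {w : F}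
    (hx : adjoint T (T x) + α • x = α • (adjoint T w + r)) :
    ‖x‖ ^ 2 ≤ α * ‖w‖ ^ 2 / 2 + ‖r‖ ^ 2 := by
  have henergy : ‖T x‖ ^ 2 + α * ‖x‖ ^ 2 = α * ⟪w, T x⟫_ℝ + α * ⟪r, x⟫_ℝ := by
    simpa [inner_add_left, real_inner_smul_left, adjoint_inner_left, real_inner_self_eq_norm_sq]
      using congrArg (⟪·, x⟫_ℝ) hx
  have hw := real_inner_le_norm w (T x)
  have hr := real_inner_le_norm r x
  -- AM-GM on both cross terms: `α ‖w‖ ‖Tx‖ ≤ ‖Tx‖² + α²‖w‖²/4`, `‖r‖ ‖x‖ ≤ (‖x‖² + ‖r‖²)/2`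
  refine le_of_mul_le_mul_left ?_ hα
  nlinarith [sq_nonneg (‖T x‖ - α * ‖w‖ / 2), mul_nonneg hα.le (sq_nonneg (‖x‖ - ‖r‖))]

theorem ContinuousLinearMap.tendsto_zero_of_tikhonov_eq {y : E}
    (hy : y ∈ (adjoint T).range.topologicalClosure) {x : ℝ → E}
    (hx : ∀ α > 0, adjoint T (T (x α)) + α • x α = α • y) : Tendsto x (𝓝[>] 0) (𝓝 0) := by
  rw [Metric.tendsto_nhds]
  intro ε hε
  obtain ⟨_, ⟨w, rfl⟩, hyw⟩ := Metric.mem_closure_iff.1 hy (ε / 2) (by positivity)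
  have hsmall : ∀ᶠ α in 𝓝[>] 0, α * ‖w‖ ^ 2 / 2 < ε ^ 2 / 2 := by
    have : Tendsto (fun α : ℝ => α * ‖w‖ ^ 2 / 2) (𝓝 0) (𝓝 0) :=
      (by fun_prop : Continuous fun α : ℝ => α * ‖w‖ ^ 2 / 2).tendsto' 0 0 (by simp)
    exact nhdsWithin_le_nhds (this.eventually (gt_mem_nhds (by positivity)))
  filter_upwards [hsmall, self_mem_nhdsWithin] with α hαw hα
  have hbound := T.norm_sq_le_of_tikhonov_eq hα (r := y - adjoint T w)
    (by rw [add_sub_cancel]; exact hx α hα)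
  rw [← dist_eq_norm] at hbound
  replace hyw : dist y (adjoint T w) < ε / 2 := hyw
  rw [dist_zero_right]
  nlinarith [dist_nonneg (x := y) (y := adjoint T w), norm_nonneg (x α)]

end Tikhonov

/-- Consistency of Tikhonov regularization with exact data: the Tikhonov
solutions `f_α = (T*T + αI)⁻¹ T* u` converge in norm to the minimal-norm
solution `f†` of `Tf = u` as `α → 0⁺`. -/
theorem tikhonov_convergence_exact_data
    {H : Type*} [NormedAddCommGroup H] [InnerProductSpace ℝ H] [CompleteSpace H]
    (T : H →L[ℝ] H) (u : H) (fdag : H)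
    (hsol : T fdag = u)
    (hmin : ∀ g : H, T g = u → ‖fdag‖ ≤ ‖g‖)
    (f : ℝ → H)
    (hf : ∀ α : ℝ, 0 < α →
      ((adjoint T).comp T + α • (1 : H →L[ℝ] H)) (f α) = adjoint T u) :
    Tendsto f (nhdsWithin 0 (Set.Ioi 0)) (nhds fdag) := by
  have hperp : fdag ∈ T.kerᗮ :=
    Submodule.mem_orthogonal_of_forall_norm_le_norm_sub fun k hk =>
      hmin _ (by rw [map_sub, show T k = 0 from hk, sub_zero, hsol])
  rw [T.orthogonal_ker] at hperp
  have hdiff : Tendsto (fun α => fdag - f α) (𝓝[>] 0) (𝓝 0) :=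
    T.tendsto_zero_of_tikhonov_eq hperp fun α hα => by
      have h := hf α hα
      rw [← hsol] at h
      simp only [add_apply, comp_apply, smul_apply, one_apply_eq_self] at h
      rw [map_sub, map_sub, smul_sub, ← h]
      abel
  simpa using (tendsto_const_nhds (x := fdag)).sub hdiff
end

section
/- The function α ↦ ‖T f_α − u‖, where f_α = (T*T + αI)⁻¹T*u, is nondecreasing in α > 0, and the function α ↦ ‖f_α‖ is nonincreasing in α > 0. -/
open ContinuousLinearMap

/-!
`f_α` solves the normal equation of the Tikhonov functional
`J_α g = ‖T g − u‖² + α ‖g‖²`, and the vanishing of the first variation gives the exact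
expansion `J_α (f_α + h) = J_α f_α + ‖T h‖² + α ‖h‖²`, so `f_α` minimizes `J_α`.
Comparing `J_α (f_α) ≤ J_α (f_β)` with `J_β (f_β) ≤ J_β (f_α)` and adding gives
`(β − α)(‖f_β‖² − ‖f_α‖²) ≤ 0`; feeding this back into the first inequality
bounds the residual.
-/

open RealInnerProductSpace

section Tikhonov

variable {E F : Type*} [NormedAddCommGroup E] [InnerProductSpace ℝ E]
  [NormedAddCommGroup F] [InnerProductSpace ℝ F]

def tikhonovFunctional (T : E →L[ℝ] F) (u : F) (α : ℝ) (g : E) : ℝ :=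
  ‖T g - u‖ ^ 2 + α * ‖g‖ ^ 2

lemma inner_residual_add_inner_eq_zero_of_normal_eq [CompleteSpace E] [CompleteSpace F]
    {T : E →L[ℝ] F} {u : F} {α : ℝ} {x : E}
    (hx : ((adjoint T).comp T + α • (1 : E →L[ℝ] E)) x = adjoint T u) (h : E) :
    ⟪T x - u, T h⟫ + α * ⟪x, h⟫ = 0 := by
  have hgrad : adjoint T (T x - u) + α • x = 0 := by
    rw [map_sub, sub_add_eq_add_sub, sub_eq_zero]
    simpa only [add_apply, comp_apply, smul_apply, one_apply_eq_self] using hx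
  rw [← adjoint_inner_left, ← real_inner_smul_left, ← inner_add_left, hgrad, inner_zero_left]

lemma tikhonovFunctional_add_of_inner_eq_zero {T : E →L[ℝ] F} {u : F} {α : ℝ} {x h : E}
    (hcross : ⟪T x - u, T h⟫ + α * ⟪x, h⟫ = 0) :
    tikhonovFunctional T u α (x + h) = tikhonovFunctional T u α x + ‖T h‖ ^ 2 + α * ‖h‖ ^ 2 := by
  have hres : T (x + h) - u = (T x - u) + T h := by rw [map_add]; abel
  simp only [tikhonovFunctional]
  rw [hres, norm_add_sq_real, norm_add_sq_real]
  linear_combination 2 * hcross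

lemma tikhonovFunctional_le_of_normal_eq [CompleteSpace E] [CompleteSpace F]
    {T : E →L[ℝ] F} {u : F} {α : ℝ} (hα : 0 ≤ α) {x : E}
    (hx : ((adjoint T).comp T + α • (1 : E →L[ℝ] E)) x = adjoint T u) (g : E) :
    tikhonovFunctional T u α x ≤ tikhonovFunctional T u α g := by
  have hg := tikhonovFunctional_add_of_inner_eq_zero
    (inner_residual_add_inner_eq_zero_of_normal_eq hx (g - x))
  rw [add_sub_cancel] at hg
  rw [hg]
  nlinarith [sq_nonneg ‖T (g - x)‖, sq_nonneg ‖g - x‖]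

end Tikhonov

lemma le_of_add_mul_le_of_add_mul_le {a₁ a₂ b₁ b₂ α β : ℝ} (hαβ : α < β)
    (h₁ : a₁ + α * b₁ ≤ a₂ + α * b₂) (h₂ : a₂ + β * b₂ ≤ a₁ + β * b₁) : b₂ ≤ b₁ := by
  nlinarith

/-- Monotonicity underlying the Discrepancy Principle: `α ↦ ‖T f_α − u‖` is
nondecreasing and `α ↦ ‖f_α‖` is nonincreasing on `α > 0`. -/
theorem tikhonov_monotonicity
    {H : Type*} [NormedAddCommGroup H] [InnerProductSpace ℝ H] [CompleteSpace H]
    (T : H →L[ℝ] H) (u : H)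
    (f : ℝ → H)
    (hf : ∀ α : ℝ, 0 < α →
      ((adjoint T).comp T + α • (1 : H →L[ℝ] H)) (f α) = adjoint T u) :
    (∀ α β : ℝ, 0 < α → α ≤ β → ‖T (f α) - u‖ ≤ ‖T (f β) - u‖) ∧
    (∀ α β : ℝ, 0 < α → α ≤ β → ‖f β‖ ≤ ‖f α‖) := by
  have hmin : ∀ α, 0 < α → ∀ g, tikhonovFunctional T u α (f α) ≤ tikhonovFunctional T u α g :=
    fun α hα => tikhonovFunctional_le_of_normal_eq hα.le (hf α hα)
  have norm_sq_anti : ∀ α β : ℝ, 0 < α → α ≤ β → ‖f β‖ ^ 2 ≤ ‖f α‖ ^ 2 := by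
    intro α β hα hαβ
    rcases hαβ.eq_or_lt with rfl | hlt
    · exact le_rfl
    · exact le_of_add_mul_le_of_add_mul_le hlt (hmin α hα (f β)) (hmin β (hα.trans hlt) (f α))
  refine ⟨fun α β hα hαβ => ?_, fun α β hα hαβ => ?_⟩
  · have hJ := hmin α hα (f β)
    have hb := norm_sq_anti α β hα hαβ
    unfold tikhonovFunctional at hJ
    refine (sq_le_sq₀ (norm_nonneg _) (norm_nonneg _)).mp ?_
    linarith [mul_le_mul_of_nonneg_left hb hα.le]
  · exact (sq_le_sq₀ (norm_nonneg _) (norm_nonneg _)).mp (norm_sq_anti α β hα hαβ)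
end
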